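/- arXiv:2206.06321 — 2 statements merged into one kernel-verified Lean document; each statement's English description precedes it below -/
import Mathlib

section
/- Let h₀, h₁ : B'₁ ⊂ ℝ^{d-1} → ℝ be C¹ functions with h₀(x') < h₁(x') on B'₁, and define for h₀(x') ≤ t < h₁(x') the interpolant ℓ(x', t) = ((t − h₀(x'))/(h₁(x') − h₀(x'))) · D_k h₁(x') + ((h₁(x') − t)/(h₁(x') − h₀(x'))) · D_k h₀(x'). If there is a constant N₀ such that |D_k h₁(x') − D_k h₀(x')| ≤ N₀ (h₁(x') − h₀(x'))^{1/2} for all x', then for any x' and any t₁, t₂ ∈ [h₀(x'), h₁(x')) one has |ℓ(x', t₁) − ℓ(x', t₂)| ≤ N₀ |t₁ − t₂|^{1/2}. -/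
open Real

/-- Vertical `1/2`-Hölder continuity of the interpolated slope field, with constant
independent of the gap `h₁ − h₀`. -/
theorem stmt_1 {d : ℕ} (k : Fin d) (N₀ : ℝ)
    (h₀ h₁ : EuclideanSpace ℝ (Fin d) → ℝ)
    (hc₀ : ContDiff ℝ 1 h₀) (hc₁ : ContDiff ℝ 1 h₁)
    (hlt : ∀ x ∈ Metric.ball (0 : EuclideanSpace ℝ (Fin d)) 1, h₀ x < h₁ x)
    (hineq : ∀ x ∈ Metric.ball (0 : EuclideanSpace ℝ (Fin d)) 1,
      |fderiv ℝ h₁ x (EuclideanSpace.single k 1) - fderiv ℝ h₀ x (EuclideanSpace.single k 1)|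
        ≤ N₀ * Real.sqrt (h₁ x - h₀ x))
    (x : EuclideanSpace ℝ (Fin d)) (hx : x ∈ Metric.ball (0 : EuclideanSpace ℝ (Fin d)) 1)
    (t₁ t₂ : ℝ) (ht₁ : t₁ ∈ Set.Ico (h₀ x) (h₁ x)) (ht₂ : t₂ ∈ Set.Ico (h₀ x) (h₁ x)) :
    |(((t₁ - h₀ x) / (h₁ x - h₀ x)) * fderiv ℝ h₁ x (EuclideanSpace.single k 1)
        + ((h₁ x - t₁) / (h₁ x - h₀ x)) * fderiv ℝ h₀ x (EuclideanSpace.single k 1))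
      - (((t₂ - h₀ x) / (h₁ x - h₀ x)) * fderiv ℝ h₁ x (EuclideanSpace.single k 1)
        + ((h₁ x - t₂) / (h₁ x - h₀ x)) * fderiv ℝ h₀ x (EuclideanSpace.single k 1))|
      ≤ N₀ * Real.sqrt |t₁ - t₂| := by
  set a := fderiv ℝ h₁ x (EuclideanSpace.single k 1)
  set b := fderiv ℝ h₀ x (EuclideanSpace.single k 1)
  have hg : 0 < h₁ x - h₀ x := sub_pos.2 (hlt x hx)
  have hab : |a - b| ≤ N₀ * Real.sqrt (h₁ x - h₀ x) := hineq x hx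
  have key : (((t₁ - h₀ x) / (h₁ x - h₀ x)) * a + ((h₁ x - t₁) / (h₁ x - h₀ x)) * b)
      - (((t₂ - h₀ x) / (h₁ x - h₀ x)) * a + ((h₁ x - t₂) / (h₁ x - h₀ x)) * b)
      = (t₁ - t₂) / (h₁ x - h₀ x) * (a - b) := by
    field_simp
    ring
  rw [key, abs_mul, abs_div, abs_of_pos hg]
  have htle : |t₁ - t₂| ≤ h₁ x - h₀ x := by
    rw [abs_sub_le_iff]
    constructor <;> [linarith [ht₁.2, ht₂.1]; linarith [ht₂.2, ht₁.1]]
  have h1 : |t₁ - t₂| / (h₁ x - h₀ x) * |a - b|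
      ≤ |t₁ - t₂| / (h₁ x - h₀ x) * (N₀ * Real.sqrt (h₁ x - h₀ x)) := by
    apply mul_le_mul_of_nonneg_left hab
    positivity
  refine h1.trans ?_
  have hN₀ : 0 ≤ N₀ := by
    by_contra h
    have : N₀ * Real.sqrt (h₁ x - h₀ x) < 0 :=
      mul_neg_of_neg_of_pos (lt_of_not_ge h) (Real.sqrt_pos.2 hg)
    linarith [abs_nonneg (a - b)]
  have hsg : Real.sqrt (h₁ x - h₀ x) * Real.sqrt (h₁ x - h₀ x) = h₁ x - h₀ x :=
    Real.mul_self_sqrt hg.le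
  have hs2 : Real.sqrt |t₁ - t₂| * Real.sqrt |t₁ - t₂| = |t₁ - t₂| :=
    Real.mul_self_sqrt (abs_nonneg _)
  have hsle : Real.sqrt |t₁ - t₂| ≤ Real.sqrt (h₁ x - h₀ x) := Real.sqrt_le_sqrt htle
  rw [div_mul_eq_mul_div, div_le_iff₀ hg]
  have : |t₁ - t₂| * (N₀ * Real.sqrt (h₁ x - h₀ x))
      ≤ (Real.sqrt |t₁ - t₂| * Real.sqrt (h₁ x - h₀ x)) * (N₀ * Real.sqrt (h₁ x - h₀ x)) := by
    apply mul_le_mul_of_nonneg_right _ (by positivity)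
    calc |t₁ - t₂| = Real.sqrt |t₁ - t₂| * Real.sqrt |t₁ - t₂| := hs2.symm
      _ ≤ Real.sqrt |t₁ - t₂| * Real.sqrt (h₁ x - h₀ x) :=
          mul_le_mul_of_nonneg_left hsle (Real.sqrt_nonneg _)
  refine this.trans ?_
  rw [show (Real.sqrt |t₁ - t₂| * Real.sqrt (h₁ x - h₀ x)) * (N₀ * Real.sqrt (h₁ x - h₀ x))
      = N₀ * Real.sqrt |t₁ - t₂| * (Real.sqrt (h₁ x - h₀ x) * Real.sqrt (h₁ x - h₀ x)) by ring,
    hsg]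
end

section
/- Let h₀, h₁ : ℝ^{d-1} → ℝ be twice differentiable with h₀ < h₁, and define ℓ(x', t) = ((t − h₀(x'))/(h₁(x') − h₀(x'))) D_{k₂} h₁(x') + ((h₁(x') − t)/(h₁(x') − h₀(x'))) D_{k₂} h₀(x') on the strip {h₀(x') ≤ t < h₁(x')}, as well as ℓ^{k₁}(x', t) defined analogously with k₂ replaced by k₁. Then on the strip the directional derivative identity D_{k₁} ℓ(x', t) + ℓ^{k₁}(x', t) · ∂_t ℓ(x', t) = ((t − h₀(x'))/(h₁(x') − h₀(x'))) D_{k₁} D_{k₂} h₁(x') + ((h₁(x') − t)/(h₁(x') − h₀(x'))) D_{k₁} D_{k₂} h₀(x') holds; in particular, the singular terms involving division by (h₁ − h₀)² cancel exactly. -/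
open Real

/-- The interpolated slope field `ℓ^{k,0}_d` between two interfaces. -/
noncomputable def interpSlope {d : ℕ} (k : Fin d)
    (h₀ h₁ : EuclideanSpace ℝ (Fin d) → ℝ) (x : EuclideanSpace ℝ (Fin d)) (t : ℝ) : ℝ :=
  ((t - h₀ x) / (h₁ x - h₀ x)) * fderiv ℝ h₁ x (EuclideanSpace.single k 1)
    + ((h₁ x - t) / (h₁ x - h₀ x)) * fderiv ℝ h₀ x (EuclideanSpace.single k 1)

/-- Exact cancellation: the derivative of the interpolated slope field along the tangential
vector field `(e_{k₁}, ℓ^{k₁})` equals the interpolation of the second derivatives of the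
interface functions. -/
theorem stmt_3 {d : ℕ} (k₁ k₂ : Fin d)
    (h₀ h₁ : EuclideanSpace ℝ (Fin d) → ℝ)
    (hc₀ : ContDiff ℝ 2 h₀) (hc₁ : ContDiff ℝ 2 h₁)
    (hlt : ∀ x, h₀ x < h₁ x)
    (x : EuclideanSpace ℝ (Fin d)) (t : ℝ) (ht₀ : h₀ x ≤ t) (ht₁ : t < h₁ x) :
    fderiv ℝ (fun y => interpSlope k₂ h₀ h₁ y t) x (EuclideanSpace.single k₁ 1)
      + interpSlope k₁ h₀ h₁ x t * deriv (fun s => interpSlope k₂ h₀ h₁ x s) t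
    = ((t - h₀ x) / (h₁ x - h₀ x))
        * fderiv ℝ (fun y => fderiv ℝ h₁ y (EuclideanSpace.single k₂ 1)) x
            (EuclideanSpace.single k₁ 1)
      + ((h₁ x - t) / (h₁ x - h₀ x))
        * fderiv ℝ (fun y => fderiv ℝ h₀ y (EuclideanSpace.single k₂ 1)) x
            (EuclideanSpace.single k₁ 1) := by
  have hd₀ : Differentiable ℝ h₀ := hc₀.differentiable two_ne_zero
  have hd₁ : Differentiable ℝ h₁ := hc₁.differentiable two_ne_zero
  have hne : h₁ x - h₀ x ≠ 0 := sub_ne_zero.2 (hlt x).ne'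
  -- differentiability of the slope functions
  have hf₀ : ContDiff ℝ 1 (fderiv ℝ h₀) := hc₀.fderiv_right le_rfl
  have hf₁ : ContDiff ℝ 1 (fderiv ℝ h₁) := hc₁.fderiv_right le_rfl
  set v := EuclideanSpace.single (𝕜 := ℝ) k₁ (1:ℝ) with hv
  set w := EuclideanSpace.single (𝕜 := ℝ) k₂ (1:ℝ) with hw
  have hL₀ : Differentiable ℝ (fun y => fderiv ℝ h₀ y w) :=
    (hf₀.differentiable one_ne_zero).clm_apply (differentiable_const _)
  have hL₁ : Differentiable ℝ (fun y => fderiv ℝ h₁ y w) :=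
    (hf₁.differentiable one_ne_zero).clm_apply (differentiable_const _)
  set a := h₀ x
  set b := h₁ x
  set D₀ := fderiv ℝ h₀ x v
  set D₁ := fderiv ℝ h₁ x v
  set g₀ := fderiv ℝ h₀ x w
  set g₁ := fderiv ℝ h₁ x w
  set S₀ := fderiv ℝ (fun y => fderiv ℝ h₀ y w) x v
  set S₁ := fderiv ℝ (fun y => fderiv ℝ h₁ y w) x v
  have H0 : HasFDerivAt h₀ (fderiv ℝ h₀ x) x := (hd₀ x).hasFDerivAt
  have H1 : HasFDerivAt h₁ (fderiv ℝ h₁ x) x := (hd₁ x).hasFDerivAt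
  have HL0 : HasFDerivAt (fun y => fderiv ℝ h₀ y w)
      (fderiv ℝ (fun y => fderiv ℝ h₀ y w) x) x := (hL₀ x).hasFDerivAt
  have HL1 : HasFDerivAt (fun y => fderiv ℝ h₁ y w)
      (fderiv ℝ (fun y => fderiv ℝ h₁ y w) x) x := (hL₁ x).hasFDerivAt
  have Hden : HasFDerivAt (fun y => h₁ y - h₀ y) (fderiv ℝ h₁ x - fderiv ℝ h₀ x) x :=
    H1.sub H0
  have Hn1 : HasFDerivAt (fun y => t - h₀ y) (0 - fderiv ℝ h₀ x) x :=
    (hasFDerivAt_const t x).sub H0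
  have Hn2 : HasFDerivAt (fun y => h₁ y - t) (fderiv ℝ h₁ x - 0) x :=
    H1.sub (hasFDerivAt_const t x)
  have Hinv : HasFDerivAt (fun y => (h₁ y - h₀ y)⁻¹)
      ((-((b - a) ^ 2)⁻¹) • (fderiv ℝ h₁ x - fderiv ℝ h₀ x)) x :=
    HasDerivAt.comp_hasFDerivAt (𝕜 := ℝ) x (hasDerivAt_inv hne) Hden
  have HF0 := (((Hn1.mul Hinv).mul HL1).add ((Hn2.mul Hinv).mul HL0))
  have HF : HasFDerivAt (fun y => interpSlope k₂ h₀ h₁ y t)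
      (((t - h₀ x) * (h₁ x - h₀ x)⁻¹) • fderiv ℝ (fun y => fderiv ℝ h₁ y w) x +
        (fderiv ℝ h₁ x) w •
          ((t - h₀ x) • (-((b - a) ^ 2)⁻¹) • (fderiv ℝ h₁ x - fderiv ℝ h₀ x)
            + (h₁ x - h₀ x)⁻¹ • (0 - fderiv ℝ h₀ x)) +
        (((h₁ x - t) * (h₁ x - h₀ x)⁻¹) • fderiv ℝ (fun y => fderiv ℝ h₀ y w) x +
          (fderiv ℝ h₀ x) w •
            ((h₁ x - t) • (-((b - a) ^ 2)⁻¹) • (fderiv ℝ h₁ x - fderiv ℝ h₀ x)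
              + (h₁ x - h₀ x)⁻¹ • (fderiv ℝ h₁ x - 0)))) x := by
    simpa only [interpSlope, div_eq_mul_inv, Pi.mul_def, Pi.add_def] using HF0
  have e1 : fderiv ℝ (fun y => interpSlope k₂ h₀ h₁ y t) x v
      = ((t - a) * (b - a)⁻¹) * S₁
        + g₁ * ((t - a) * ((-((b - a) ^ 2)⁻¹) * (D₁ - D₀)) + (b - a)⁻¹ * (0 - D₀))
        + (((b - t) * (b - a)⁻¹) * S₀
        + g₀ * ((b - t) * ((-((b - a) ^ 2)⁻¹) * (D₁ - D₀)) + (b - a)⁻¹ * (D₁ - 0))) := by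
    rw [HF.fderiv]
    simp [ContinuousLinearMap.add_apply, ContinuousLinearMap.smul_apply,
      ContinuousLinearMap.sub_apply, ContinuousLinearMap.zero_apply,
      ContinuousLinearMap.neg_apply, smul_eq_mul]
    ring
  -- derivative in t
  have hderiv : deriv (fun s => interpSlope k₂ h₀ h₁ x s) t = g₁ / (b - a) - g₀ / (b - a) := by
    have : HasDerivAt (fun s => interpSlope k₂ h₀ h₁ x s)
        (1 / (b - a) * g₁ + (0 - 1) / (b - a) * g₀) t := by
      unfold interpSlope
      exact ((((hasDerivAt_id t).sub_const a).div_const (b-a)).mul_const g₁).add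
        ((((hasDerivAt_const t b).sub (hasDerivAt_id t)).div_const (b-a)).mul_const g₀)
    rw [this.deriv]; ring
  rw [e1, hderiv]
  show _ = ((t - a)/(b-a)) * S₁ + ((b - t)/(b-a)) * S₀
  unfold interpSlope
  rw [← hv, show h₀ x = a from rfl, show h₁ x = b from rfl,
    show (fderiv ℝ h₀ x) v = D₀ from rfl, show (fderiv ℝ h₁ x) v = D₁ from rfl]
  field_simp
  ring
end
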